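/- Suppose in addition that S is finitely generated as a monoid, generates M as a group, and satisfies S ∩ (−S) = {0}. Let μ ∈ M and let ∂ be a nonzero locally nilpotent K-linear derivation of K[S] that is homogeneous of degree μ, i.e. for every λ ∈ S: if λ + μ ∈ S then ∂(f_λ) ∈ K·f_{λ+μ}, and if λ + μ ∉ S then ∂(f_λ) = 0. Then there exist c ∈ K, c ≠ 0, and an additive group homomorphism ρ : M → ℤ with ρ(μ) = −1 and ρ(λ) ≥ 0 for all λ ∈ S, such that ∂(f_λ) = c·ρ(λ)·f_{λ+μ} for every λ ∈ S with ρ(λ) > 0 (in which case λ + μ ∈ S) and ∂(f_λ) = 0 for every λ ∈ S with ρ(λ) = 0. (This is the classification of homogeneous locally nilpotent derivations on affine toric varieties: every nonzero T-normalized LND on A_C has the form c·∂_μ for a Demazure root μ of the cone C.) -/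

import Mathlib

/-!
Write `∂ f_s = χ(s) f_{s+μ}`. The Leibniz rule makes `χ` additive on `S`, so it extends to
`φ : M →+ K`. Iterating, `∂ⁿ f_s = ∏_{k<n} φ(s + kμ) f_{s+nμ}` as long as the factors are nonzero, so
local nilpotency gives `φ(s) + k φ(μ) = 0` for some `k ∈ ℕ`. Since `∂ ≠ 0`, some `φ(s) ≠ 0`, hence
`φ(μ) ≠ 0`; with `c = -φ(μ)` the map `ρ = φ / c` is `ℕ`-valued on `S`, hence `ℤ`-valued on `M`, and
`ρ(μ) = -1`.
-/

open AddMonoidAlgebra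

namespace AddSubmonoid

variable {M G : Type*} [AddCommGroup M] [AddCommGroup G] {S : AddSubmonoid M}

theorem exists_sub_eq_of_closure_eq_top (hS : AddSubgroup.closure (S : Set M) = ⊤) (m : M) :
    ∃ s t : S, (s : M) - t = m := by
  induction hS ▸ AddSubgroup.mem_top m using AddSubgroup.closure_induction with
  | mem x hx => exact ⟨⟨x, hx⟩, 0, sub_zero x⟩
  | zero => exact ⟨0, 0, sub_zero 0⟩
  | add x y _ _ hx hy =>
    obtain ⟨s, t, rfl⟩ := hx
    obtain ⟨s', t', rfl⟩ := hy
    exact ⟨s + s', t + t', by push_cast; abel⟩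
  | neg x _ hx =>
    obtain ⟨s, t, rfl⟩ := hx
    exact ⟨t, s, (neg_sub _ _).symm⟩

theorem exists_addMonoidHom_extend_of_closure_eq_top (hS : AddSubgroup.closure (S : Set M) = ⊤)
    (f : S →+ G) : ∃ g : M →+ G, ∀ s : S, g s = f s := by
  choose s t hst using exists_sub_eq_of_closure_eq_top hS
  have hwd : ∀ (m : M) (a b : S), (a : M) - b = m → f (s m) - f (t m) = f a - f b := by
    intro m a b h
    have : s m + b = a + t m := Subtype.ext (by push_cast; rw [← sub_eq_sub_iff_add_eq_add, hst, h])
    rw [sub_eq_sub_iff_add_eq_add, ← map_add, ← map_add, this]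
  refine ⟨AddMonoidHom.mk' (fun m => f (s m) - f (t m)) fun m m' => ?_, fun a => ?_⟩
  · rw [hwd (m + m') (s m + s m') (t m + t m') (by push_cast; rw [add_sub_add_comm, hst, hst])]
    simp only [map_add]
    abel
  · simpa using hwd a a 0 (sub_zero _)

end AddSubmonoid

theorem AddMonoidHom.exists_eq_mul_intCast_of_closure_eq_top {K M : Type*} [Field K] [CharZero K]
    [AddCommGroup M] {S : AddSubmonoid M} (hS : AddSubgroup.closure (S : Set M) = ⊤)
    (φ : M →+ K) {c : K} (hc : c ≠ 0) (h : ∀ s ∈ S, ∃ k : ℕ, φ s = k * c) :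
    ∃ ρ : M →+ ℤ, (∀ m, φ m = c * ρ m) ∧ ∀ s ∈ S, 0 ≤ ρ s := by
  have hint : ∀ m, ∃ z : ℤ, φ m = c * z := by
    let H : AddSubgroup M := (Int.castAddHom K).range.comap (c⁻¹ • φ)
    have hSH : ∀ s ∈ S, s ∈ H := fun s hs => by
      obtain ⟨k, hk⟩ := h s hs
      exact ⟨k, by
        simp only [Int.coe_castAddHom, Int.cast_natCast, smul_apply, hk, smul_eq_mul]
        field_simp⟩
    intro m
    obtain ⟨z, hz⟩ : m ∈ H := (AddSubgroup.closure_le H).2 hSH (hS ▸ AddSubgroup.mem_top m)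
    simp only [Int.coe_castAddHom, smul_apply, smul_eq_mul] at hz
    exact ⟨z, by rw [hz]; field_simp⟩
  choose ρ hρ using hint
  have hinj : ∀ {z w : ℤ}, c * z = c * w → z = w := fun h =>
    Int.cast_injective (mul_left_cancel₀ hc h)
  refine ⟨AddMonoidHom.mk' ρ fun a b => hinj ?_, hρ, fun s hs => ?_⟩
  · push_cast
    rw [← hρ, mul_add, ← hρ, ← hρ, map_add]
  · obtain ⟨k, hk⟩ := h s hs
    have hρs : ρ s = k := hinj (by rw [← hρ, hk, mul_comm]; push_cast; rfl)
    change 0 ≤ ρ s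
    exact hρs ▸ Int.natCast_nonneg k

namespace AddMonoidAlgebra

variable {R M N : Type*}

theorem of'_add [Semiring R] [Add M] (a b : M) : of' R M (a + b) = of' R M a * of' R M b := by
  simp [of'_apply, single_mul_single]

theorem smul_of'_injective [Semiring R] (m : M) : Function.Injective fun r : R => r • of' R M m := by
  intro r r' h
  simpa [of'_apply, smul_single] using h

variable [CommSemiring R] [AddMonoid M] [AddMonoid N] (f : M →+ N)

theorem mapDomainAlgHom_of' (m : M) : mapDomainAlgHom R R f (of' R M m) = of' R N (f m) := by
  simp [of'_apply]

theorem mapDomainAlgHom_injective (hf : Function.Injective f) :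
    Function.Injective (mapDomainAlgHom R R f) :=
  mapDomain_injective hf

end AddMonoidAlgebra

section

variable {K M : Type*} [CommRing K] [AddCommMonoid M] {S : AddSubmonoid M}

local notation "ι" => mapDomainAlgHom K K (AddSubmonoid.subtype S)

/-- `D f_s = χ(s) f_{s+μ}` for all `s ∈ S`, read in `K[M]` so that it makes sense also when
`s + μ ∉ S` (both sides then vanish). -/
def Derivation.IsHomogeneousWith (D : Derivation K K[S] K[S]) (μ : M) (χ : S → K) : Prop :=
  ∀ s : S, ι (D (of' K S s)) = χ s • of' K M (s + μ)

theorem Derivation.exists_isHomogeneousWith {D : Derivation K K[S] K[S]} {μ : M}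
    (hhom : ∀ l : S,
      (∀ h : (l : M) + μ ∈ S, ∃ c : K, D (of' K S l) = c • of' K S (⟨(l : M) + μ, h⟩ : S))
      ∧ ((l : M) + μ ∉ S → D (of' K S l) = 0)) :
    ∃ χ : S → K, D.IsHomogeneousWith μ χ := by
  have : ∀ l : S, ∃ c : K, ι (D (of' K S l)) = c • of' K M (l + μ) := fun l => by
    by_cases h : (l : M) + μ ∈ S
    · obtain ⟨c, hc⟩ := (hhom l).1 h
      exact ⟨c, by rw [hc, _root_.map_smul, mapDomainAlgHom_of']; rfl⟩
    · exact ⟨0, by rw [(hhom l).2 h, map_zero, zero_smul]⟩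
  choose χ hχ using this
  exact ⟨χ, hχ⟩

namespace Derivation.IsHomogeneousWith

variable {D : Derivation K K[S] K[S]} {μ : M} {χ : S → K}

theorem apply_of' (h : D.IsHomogeneousWith μ χ) {s : S} (hs : (s : M) + μ ∈ S) :
    D (of' K S s) = χ s • of' K S ⟨s + μ, hs⟩ := by
  apply mapDomainAlgHom_injective _ S.subtype_injective
  rw [h s, _root_.map_smul, mapDomainAlgHom_of']
  rfl

theorem apply_of'_eq_zero (h : D.IsHomogeneousWith μ χ) {s : S} (hs : χ s = 0) :
    D (of' K S s) = 0 := by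
  apply mapDomainAlgHom_injective _ S.subtype_injective
  rw [h s, hs, zero_smul, map_zero]

theorem add_mem (h : D.IsHomogeneousWith μ χ)
    (hD : ∀ s : S, (s : M) + μ ∉ S → D (of' K S s) = 0) {s : S} (hs : χ s ≠ 0) :
    (s : M) + μ ∈ S := by
  by_contra hs'
  apply hs
  apply smul_of'_injective ((s : M) + μ)
  dsimp only
  rw [← h s, hD s hs', map_zero, zero_smul]

theorem map_add (h : D.IsHomogeneousWith μ χ) (a b : S) : χ (a + b) = χ a + χ b := by
  apply smul_of'_injective ((a : M) + b + μ)
  have := congrArg ι (D.leibniz (of' K S a) (of' K S b))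
  simp only [← of'_add, h _, smul_eq_mul, _root_.map_add, map_mul, mapDomainAlgHom_of',
    mul_smul_comm, AddSubmonoid.coe_add, AddSubmonoid.coe_subtype] at this
  dsimp only
  rw [this, add_smul, add_comm (χ a • _), add_left_comm (b : M), add_assoc]

theorem exists_ne_zero (h : D.IsHomogeneousWith μ χ) (hD0 : D ≠ 0) : ∃ s : S, χ s ≠ 0 := by
  by_contra! hχ
  refine hD0 (Derivation.ext fun x => ?_)
  rw [Derivation.zero_apply]
  induction x using AddMonoidAlgebra.induction_linear with
  | zero => exact D.map_zero
  | add x y hx hy => rw [_root_.map_add, hx, hy, add_zero]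
  | single s r =>
    rw [← mul_one r, ← smul_eq_mul, ← smul_single, ← of'_apply, D.map_smul,
      h.apply_of'_eq_zero (hχ s), smul_zero]

theorem pow_apply_of' {φ : M →+ K} (h : D.IsHomogeneousWith μ fun s => φ s)
    (hD : ∀ s : S, (s : M) + μ ∉ S → D (of' K S s) = 0) (s : S) (n : ℕ)
    (hn : ∀ k < n, φ (s + k • μ) ≠ 0) :
    ∃ t : S, (t : M) = s + n • μ ∧
      (D.toLinearMap ^ n) (of' K S s) = (∏ k ∈ Finset.range n, φ (s + k • μ)) • of' K S t := by
  induction n with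
  | zero => exact ⟨s, by simp, by simp⟩
  | succ n ih =>
    obtain ⟨t, ht, hpow⟩ := ih fun k hk => hn k (Nat.lt_succ_of_lt hk)
    have hφt : φ t ≠ 0 := ht ▸ hn n n.lt_succ_self
    refine ⟨⟨t + μ, h.add_mem hD hφt⟩, by simp [ht, succ_nsmul, add_assoc], ?_⟩
    rw [pow_succ', Module.End.mul_apply, hpow, _root_.map_smul, Derivation.coeFn_coe,
      h.apply_of' (h.add_mem hD hφt), smul_smul, Finset.prod_range_succ, ← ht]

theorem exists_add_nsmul_eq_zero [IsDomain K] {φ : M →+ K} (h : D.IsHomogeneousWith μ fun s => φ s)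
    (hD : ∀ s : S, (s : M) + μ ∉ S → D (of' K S s) = 0)
    (hLN : ∀ a : K[S], ∃ n : ℕ, (D.toLinearMap ^ n) a = 0) (s : S) :
    ∃ k : ℕ, φ s + k • φ μ = 0 := by
  by_contra! hne
  obtain ⟨n, hn⟩ := hLN (of' K S s)
  obtain ⟨t, -, hpow⟩ := h.pow_apply_of' hD s n fun k _ => by simpa using hne k
  rw [hn, eq_comm, smul_eq_zero, Finset.prod_eq_zero_iff] at hpow
  rcases hpow with ⟨k, -, hk⟩ | ht
  · exact hne k (by simpa using hk)
  · simp [of'_apply] at ht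

end Derivation.IsHomogeneousWith
end

theorem stmt10_general {K M : Type*} [Field K] [CharZero K] [AddCommGroup M]
    (S : AddSubmonoid M)
    (hgen : AddSubgroup.closure (S : Set M) = ⊤)
    (μ : M)
    (D : Derivation K (AddMonoidAlgebra K S) (AddMonoidAlgebra K S))
    (hD0 : D ≠ 0)
    (hLN : ∀ a : AddMonoidAlgebra K S, ∃ n : ℕ, (D.toLinearMap ^ n) a = 0)
    (hhom : ∀ l : S,
      (∀ h : (l : M) + μ ∈ S, ∃ c : K, D (of' K S l) = c • of' K S (⟨(l : M) + μ, h⟩ : S))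
      ∧ ((l : M) + μ ∉ S → D (of' K S l) = 0)) :
    ∃ (c : K) (ρ : M →+ ℤ), c ≠ 0 ∧ ρ μ = -1 ∧ (∀ l ∈ S, 0 ≤ ρ l)
      ∧ ∀ l : S,
        (∀ _h : 0 < ρ (l : M), ∃ hmem : (l : M) + μ ∈ S,
          D (of' K S l) = (c * (ρ (l : M) : K)) • of' K S (⟨(l : M) + μ, hmem⟩ : S))
        ∧ (ρ (l : M) = 0 → D (of' K S l) = 0) := by
  have hD : ∀ s : S, (s : M) + μ ∉ S → D (of' K S s) = 0 := fun s => (hhom s).2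
  obtain ⟨χ, hχ⟩ := D.exists_isHomogeneousWith hhom
  obtain ⟨φ, hφχ⟩ := AddSubmonoid.exists_addMonoidHom_extend_of_closure_eq_top hgen
    (AddMonoidHom.mk' χ hχ.map_add)
  have hφ : D.IsHomogeneousWith μ fun s => φ s := fun s => by simp only [hφχ]; exact hχ s
  obtain ⟨s₀, hs₀⟩ := hφ.exists_ne_zero hD0
  have hμ : φ μ ≠ 0 := fun h0 => by
    obtain ⟨k, hk⟩ := hφ.exists_add_nsmul_eq_zero hD hLN s₀
    rw [h0, smul_zero, add_zero] at hk
    exact hs₀ hk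
  have hc : -φ μ ≠ 0 := neg_ne_zero.2 hμ
  obtain ⟨ρ, hρ, hρS⟩ := φ.exists_eq_mul_intCast_of_closure_eq_top hgen hc fun s hs => by
    obtain ⟨k, hk⟩ := hφ.exists_add_nsmul_eq_zero hD hLN ⟨s, hs⟩
    exact ⟨k, by rw [nsmul_eq_mul] at hk; linear_combination hk⟩
  refine ⟨-φ μ, ρ, hc, ?_, hρS, fun l => ⟨fun hl => ?_, fun hl => ?_⟩⟩
  · exact Int.cast_injective (α := K) (mul_left_cancel₀ hc (by rw [← hρ]; simp))
  · have hφl : φ l ≠ 0 := by rw [hρ]; exact mul_ne_zero hc (Int.cast_ne_zero.2 hl.ne')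
    exact ⟨hφ.add_mem hD hφl, by rw [hφ.apply_of', hρ]⟩
  · exact hφ.apply_of'_eq_zero (by rw [hρ, hl]; simp)

/-- Classification of homogeneous locally nilpotent derivations on affine toric varieties:
every nonzero locally nilpotent `K`-derivation of `K[S]` homogeneous of degree `μ` has the form
`c·∂_μ` for a Demazure root `μ` of the weight cone, i.e. there exist `c ≠ 0` and `ρ : M →+ ℤ`
with `ρ(μ) = -1`, `ρ ≥ 0` on `S`, such that `∂ f_λ = c ρ(λ) f_{λ+μ}` when `ρ(λ) > 0` and
`∂ f_λ = 0` when `ρ(λ) = 0`. -/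
theorem stmt10 {K M : Type*} [Field K] [CharZero K] [AddCommGroup M]
    [Module.Free ℤ M] [Module.Finite ℤ M]
    (S : AddSubmonoid M) (hFG : S.FG)
    (hgen : AddSubgroup.closure (S : Set M) = ⊤)
    (hsharp : ∀ x ∈ S, -x ∈ S → x = 0)
    (μ : M)
    (D : Derivation K (AddMonoidAlgebra K S) (AddMonoidAlgebra K S))
    (hD0 : D ≠ 0)
    (hLN : ∀ a : AddMonoidAlgebra K S, ∃ n : ℕ, (D.toLinearMap ^ n) a = 0)
    (hhom : ∀ l : S,
      (∀ h : (l : M) + μ ∈ S, ∃ c : K, D (of' K S l) = c • of' K S (⟨(l : M) + μ, h⟩ : S))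
      ∧ ((l : M) + μ ∉ S → D (of' K S l) = 0)) :
    ∃ (c : K) (ρ : M →+ ℤ), c ≠ 0 ∧ ρ μ = -1 ∧ (∀ l ∈ S, 0 ≤ ρ l)
      ∧ ∀ l : S,
        (∀ _h : 0 < ρ (l : M), ∃ hmem : (l : M) + μ ∈ S,
          D (of' K S l) = (c * (ρ (l : M) : K)) • of' K S (⟨(l : M) + μ, hmem⟩ : S))
        ∧ (ρ (l : M) = 0 → D (of' K S l) = 0) :=
  stmt10_general S hgen μ D hD0 hLN hhom
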